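/- Let λ ∈ ℝⁿ, U ⊆ Ω open, and let u be a KZ solution on U with spectral parameter λ. Set φ(x) = Σ_{g∈G} ε(g) u_g(x). Then for every ξ ∈ ℝⁿ and every integer d ≥ 0: (D_ξ^{(d)} φ)(x) = Σ_{g∈G} ε(g) ⟨ξ, gλ⟩^d u_g(x) for all x ∈ U. -/

import Mathlib

open Matrix Finset

noncomputable section

abbrev OG (n : ℕ) := ↥(Matrix.orthogonalGroup (Fin n) ℝ)

def mOf {n : ℕ} {G : Subgroup (OG n)} (g : G) : Matrix (Fin n) (Fin n) ℝ :=
  ((g : OG n) : Matrix (Fin n) (Fin n) ℝ)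

/-- `M` is the orthogonal reflection with normal vector `v`. -/
def IsReflWith {n : ℕ} (M : Matrix (Fin n) (Fin n) ℝ) (v : Fin n → ℝ) : Prop :=
  v ≠ 0 ∧ ∀ x : Fin n → ℝ, M.mulVec x = x - (2 * (v ⬝ᵥ x) / (v ⬝ᵥ v)) • v

/-- The complement of the reflection hyperplanes. -/
def OmegaSet {n : ℕ} {G : Subgroup (OG n)} (A : Finset G) (α : G → Fin n → ℝ) :
    Set (Fin n → ℝ) := {x | ∀ s ∈ A, α s ⬝ᵥ x ≠ 0}

/-- A solution of the KZ equations on `U` with spectral parameter `l`: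
a `C^∞` function `u : U → ℂ[G]` satisfying
`∂_ξ u_g = Σ_{s∈A} m_s (⟨α_s,ξ⟩/⟨α_s,x⟩)(u_{sg} + u_g) + ⟨ξ, gl⟩ u_g`. -/
def IsKZSol {n : ℕ} {G : Subgroup (OG n)} [Fintype G] (A : Finset G)
    (α : G → Fin n → ℝ) (m : G → ℕ) (l : Fin n → ℝ) (U : Set (Fin n → ℝ))
    (u : (Fin n → ℝ) → G → ℂ) : Prop :=
  ContDiffOn ℝ (⊤ : ℕ∞) u U ∧
  ∀ (g : G) (ξ : Fin n → ℝ), ∀ x ∈ U,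
    fderiv ℝ (fun y => u y g) x ξ =
      (∑ s ∈ A, (m s : ℂ) * (((α s ⬝ᵥ ξ) / (α s ⬝ᵥ x) : ℝ) : ℂ) * (u x (s * g) + u x g))
      + ((ξ ⬝ᵥ (mOf g).mulVec l : ℝ) : ℂ) * u x g

/-- The operators `D_ξ^{(d)}`. -/
noncomputable def Dop {n : ℕ} {G : Subgroup (OG n)} (A : Finset G)
    (α : G → Fin n → ℝ) (m : G → ℕ) :
    ℕ → (Fin n → ℝ) → ((Fin n → ℝ) → ℂ) → (Fin n → ℝ) → ℂ
  | 0, _, f => f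
  | d + 1, ξ, f => fun x =>
      fderiv ℝ (Dop A α m d ξ f) x ξ
      + ∑ s ∈ A, (m s : ℂ) * (((α s ⬝ᵥ ξ) / (α s ⬝ᵥ x) : ℝ) : ℂ)
          * (Dop A α m d ((mOf s).mulVec ξ) f x - Dop A α m d ξ f x)

/-- The symmetrized operators `D_{ξ,d} = Σ_{g∈G} D_{gξ}^{(d)}`. -/
noncomputable def Dtot {n : ℕ} {G : Subgroup (OG n)} [Fintype G] (A : Finset G)
    (α : G → Fin n → ℝ) (m : G → ℕ) (ξ : Fin n → ℝ) (d : ℕ)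
    (f : (Fin n → ℝ) → ℂ) (x : Fin n → ℝ) : ℂ :=
  ∑ g : G, Dop A α m d ((mOf g).mulVec ξ) f x

/-- A solution of the Calogero–Moser system on `U` with spectral parameter `l`:
a `C^∞` function `φ` with `D_{ξ,d} φ = (Σ_{g∈G} ⟨gξ,l⟩^d) φ`. -/
def IsCMSol {n : ℕ} {G : Subgroup (OG n)} [Fintype G] (A : Finset G)
    (α : G → Fin n → ℝ) (m : G → ℕ) (l : Fin n → ℝ) (U : Set (Fin n → ℝ))
    (φ : (Fin n → ℝ) → ℂ) : Prop :=
  ContDiffOn ℝ (⊤ : ℕ∞) φ U ∧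
  ∀ (ξ : Fin n → ℝ) (d : ℕ), ∀ x ∈ U,
    Dtot A α m ξ d φ x = (∑ g : G, (((mOf g).mulVec ξ ⬝ᵥ l : ℝ) : ℂ) ^ d) * φ x


/- ----------------- Auxiliary lemmas ----------------- -/

lemma matrix_ext_of_mulVec {n : ℕ} {M N : Matrix (Fin n) (Fin n) ℝ}
    (h : ∀ x, M.mulVec x = N.mulVec x) : M = N := by
  ext i j
  have := congrFun (h (Pi.single j 1)) i
  simpa using this

lemma refl_vv_ne {n : ℕ} {M : Matrix (Fin n) (Fin n) ℝ} {v : Fin n → ℝ}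
    (h : IsReflWith M v) : v ⬝ᵥ v ≠ 0 := fun hz => h.1 (dotProduct_self_eq_zero.mp hz)

/-- Reflections are self-adjoint. -/
lemma refl_adj {n : ℕ} {M : Matrix (Fin n) (Fin n) ℝ} {v : Fin n → ℝ}
    (h : IsReflWith M v) (ξ w : Fin n → ℝ) :
    M.mulVec ξ ⬝ᵥ w = ξ ⬝ᵥ M.mulVec w := by
  have hv := refl_vv_ne h
  rw [h.2, h.2]
  simp only [sub_dotProduct, dotProduct_sub, smul_dotProduct, dotProduct_smul, smul_eq_mul]
  rw [dotProduct_comm v ξ]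
  ring

/-- Reflections are involutions. -/
lemma refl_sq {n : ℕ} {M : Matrix (Fin n) (Fin n) ℝ} {v : Fin n → ℝ}
    (h : IsReflWith M v) : M * M = 1 := by
  have hv := refl_vv_ne h
  apply matrix_ext_of_mulVec
  intro x
  rw [← mulVec_mulVec, h.2, h.2 x, one_mulVec]
  simp only [dotProduct_sub, dotProduct_smul, smul_eq_mul]
  funext i
  simp only [Pi.sub_apply, Pi.smul_apply, smul_eq_mul]
  field_simp
  ring

/-- Reflections have determinant `-1`. -/
lemma refl_det {n : ℕ} {M : Matrix (Fin n) (Fin n) ℝ} {v : Fin n → ℝ}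
    (h : IsReflWith M v) : M.det = -1 := by
  have hv := refl_vv_ne h
  have hM : M = 1 + replicateCol Unit ((-(2 / (v ⬝ᵥ v))) • v) * replicateRow Unit v := by
    apply matrix_ext_of_mulVec
    intro x
    rw [h.2, add_mulVec, one_mulVec, ← mulVec_mulVec]
    funext i
    simp only [Pi.sub_apply, Pi.add_apply, Pi.smul_apply, smul_eq_mul, Matrix.mulVec,
      dotProduct, Matrix.replicateCol_apply, Matrix.replicateRow_apply, Finset.univ_unique,
      Finset.sum_singleton]
    field_simp
    ring
  rw [hM, det_one_add_replicateCol_mul_replicateRow, dotProduct_smul, smul_eq_mul, dotProduct_comm]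
  field_simp
  ring

lemma mOf_mul {n : ℕ} {G : Subgroup (OG n)} (a b : G) : mOf (a * b) = mOf a * mOf b := rfl

lemma mOf_one {n : ℕ} {G : Subgroup (OG n)} : mOf (1 : G) = 1 := rfl

lemma mOf_injective {n : ℕ} {G : Subgroup (OG n)} : Function.Injective (mOf (G := G)) :=
  fun _ _ h => Subtype.ext (Subtype.ext h)

/-- The key algebraic cancellation. -/
lemma sum_cancel {I J : Type*} [Fintype J] (A : Finset I) (c : I → ℂ) (a w q : J → ℂ)
    (b : I → J → ℂ) :
    (∑ g : J, a g * ((∑ s ∈ A, c s * (b s g + w g)) + q g * w g))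
      + ∑ s ∈ A, c s * ((-∑ g : J, a g * b s g) - ∑ g : J, a g * w g)
    = ∑ g : J, a g * (q g * w g) := by
  have h1 : ∀ g : J, a g * ((∑ s ∈ A, c s * (b s g + w g)) + q g * w g)
      = (∑ s ∈ A, (c s * (a g * b s g) + c s * (a g * w g))) + a g * (q g * w g) := by
    intro g
    rw [mul_add, Finset.mul_sum]
    congr 1
    exact Finset.sum_congr rfl fun s _ => by ring
  have h2 : ∀ s ∈ A, c s * ((-∑ g : J, a g * b s g) - ∑ g : J, a g * w g)
      = -∑ g : J, (c s * (a g * b s g) + c s * (a g * w g)) := by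
    intro s _
    rw [Finset.sum_add_distrib, ← Finset.mul_sum, ← Finset.mul_sum]
    ring
  rw [Finset.sum_congr rfl h2, Finset.sum_congr rfl fun g _ => h1 g,
    Finset.sum_add_distrib, Finset.sum_comm, Finset.sum_neg_distrib]
  abel

/-- For a KZ solution `u` and `φ = Σ_{g∈G} ε(g) u_g`,
`D_ξ^{(d)} φ = Σ_{g∈G} ε(g) ⟨ξ, gλ⟩^d u_g` on `U`. -/
theorem Dop_matsuo_cherednik
    (n : ℕ) (hn : 1 ≤ n) (G : Subgroup (OG n)) [Fintype G]
    (A : Finset G) (α : G → Fin n → ℝ)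
    (hA : ∀ s : G, s ∈ A ↔ ∃ v : Fin n → ℝ, IsReflWith (mOf s) v)
    (hrefl : ∀ s ∈ A, IsReflWith (mOf s) (α s))
    (hgen : Subgroup.closure (A : Set G) = ⊤)
    (m : G → ℕ) (hm : ∀ (g : G), ∀ s ∈ A, m (g * s * g⁻¹) = m s)
    (l : Fin n → ℝ) (U : Set (Fin n → ℝ)) (hUopen : IsOpen U) (hUΩ : U ⊆ OmegaSet A α)
    (u : (Fin n → ℝ) → G → ℂ) (hu : IsKZSol A α m l U u)
    (ξ : Fin n → ℝ) (d : ℕ) :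
    ∀ x ∈ U, Dop A α m d ξ (fun y => ∑ g : G, (mOf g).det * u y g) x
      = ∑ g : G, ((mOf g).det : ℂ) * ((ξ ⬝ᵥ (mOf g).mulVec l : ℝ) : ℂ) ^ d * u x g := by
    classical
  induction d generalizing ξ with
  | zero =>
    intro x hx
    simp [Dop]
  | succ d ih =>
    intro x hx
    have hdiff : ∀ g : G, DifferentiableAt ℝ (fun y => u y g) x := fun g =>
      ((contDiffOn_pi.mp hu.1 g).differentiableOn (by simp)).differentiableAt
        (hUopen.mem_nhds hx)
    have hfd : fderiv ℝ (Dop A α m d ξ (fun y => ∑ g : G, (mOf g).det * u y g)) x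
        = fderiv ℝ (fun y => ∑ g : G,
            ((mOf g).det : ℂ) * ((ξ ⬝ᵥ (mOf g).mulVec l : ℝ) : ℂ) ^ d * u y g) x :=
      (Filter.eventuallyEq_of_mem (hUopen.mem_nhds hx) fun y hy => ih ξ y hy).fderiv_eq
    have hfd2 : fderiv ℝ (fun y => ∑ g : G,
          ((mOf g).det : ℂ) * ((ξ ⬝ᵥ (mOf g).mulVec l : ℝ) : ℂ) ^ d * u y g) x ξ
        = ∑ g : G, ((mOf g).det : ℂ) * ((ξ ⬝ᵥ (mOf g).mulVec l : ℝ) : ℂ) ^ d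
            * (fderiv ℝ (fun y => u y g) x ξ) := by
      rw [fderiv_fun_sum fun g _ => (hdiff g).const_mul _, ContinuousLinearMap.sum_apply]
      exact Finset.sum_congr rfl fun g _ => by
        rw [fderiv_const_mul (hdiff g)]
        simp
    have hDs : ∀ s ∈ A,
        Dop A α m d ((mOf s).mulVec ξ) (fun y => ∑ g : G, (mOf g).det * u y g) x
        = -∑ g : G, ((mOf g).det : ℂ) * ((ξ ⬝ᵥ (mOf g).mulVec l : ℝ) : ℂ) ^ d
            * u x (s * g) := by
      intro s hsA
      have hR := hrefl s hsA
      have hss : s * s = 1 := mOf_injective (by rw [mOf_mul, refl_sq hR, mOf_one])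
      have hdetS : (mOf s).det = -1 := refl_det hR
      rw [ih ((mOf s).mulVec ξ) x hx, ← Finset.sum_neg_distrib]
      refine Fintype.sum_equiv (Equiv.mulLeft s) _ _ fun g => ?_
      have h1 : s * (s * g) = g := by rw [← mul_assoc, hss, one_mul]
      have h2 : (mOf s).mulVec ξ ⬝ᵥ (mOf g).mulVec l = ξ ⬝ᵥ (mOf (s * g)).mulVec l := by
        rw [refl_adj hR, mulVec_mulVec, ← mOf_mul]
      have h3 : (mOf (s * g)).det = -(mOf g).det := by
        rw [mOf_mul, det_mul, hdetS]; ring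
      simp only [Equiv.coe_mulLeft, h1, h2, h3]
      push_cast
      ring
    have hDξ := ih ξ x hx
    have hKZ : ∑ g : G, ((mOf g).det : ℂ) * ((ξ ⬝ᵥ (mOf g).mulVec l : ℝ) : ℂ) ^ d
          * (fderiv ℝ (fun y => u y g) x ξ)
        = ∑ g : G, ((mOf g).det : ℂ) * ((ξ ⬝ᵥ (mOf g).mulVec l : ℝ) : ℂ) ^ d
          * ((∑ s ∈ A, (m s : ℂ) * (((α s ⬝ᵥ ξ) / (α s ⬝ᵥ x) : ℝ) : ℂ)
                * (u x (s * g) + u x g))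
            + ((ξ ⬝ᵥ (mOf g).mulVec l : ℝ) : ℂ) * u x g) :=
      Finset.sum_congr rfl fun g _ => by rw [hu.2 g ξ x hx]
    have hA2 : ∑ s ∈ A, (m s : ℂ) * (((α s ⬝ᵥ ξ) / (α s ⬝ᵥ x) : ℝ) : ℂ)
          * (Dop A α m d ((mOf s).mulVec ξ) (fun y => ∑ g : G, (mOf g).det * u y g) x
            - Dop A α m d ξ (fun y => ∑ g : G, (mOf g).det * u y g) x)
        = ∑ s ∈ A, (m s : ℂ) * (((α s ⬝ᵥ ξ) / (α s ⬝ᵥ x) : ℝ) : ℂ)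
          * ((-∑ g : G, ((mOf g).det : ℂ) * ((ξ ⬝ᵥ (mOf g).mulVec l : ℝ) : ℂ) ^ d
                * u x (s * g))
            - ∑ g : G, ((mOf g).det : ℂ) * ((ξ ⬝ᵥ (mOf g).mulVec l : ℝ) : ℂ) ^ d
                * u x g) :=
      Finset.sum_congr rfl fun s hsA => by rw [hDs s hsA, hDξ]
    show fderiv ℝ (Dop A α m d ξ (fun y => ∑ g : G, (mOf g).det * u y g)) x ξ
        + ∑ s ∈ A, (m s : ℂ) * (((α s ⬝ᵥ ξ) / (α s ⬝ᵥ x) : ℝ) : ℂ)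
          * (Dop A α m d ((mOf s).mulVec ξ) (fun y => ∑ g : G, (mOf g).det * u y g) x
            - Dop A α m d ξ (fun y => ∑ g : G, (mOf g).det * u y g) x) = _
    rw [hfd, hfd2, hKZ, hA2,
      sum_cancel A (fun s => (m s : ℂ) * (((α s ⬝ᵥ ξ) / (α s ⬝ᵥ x) : ℝ) : ℂ))
        (fun g => ((mOf g).det : ℂ) * ((ξ ⬝ᵥ (mOf g).mulVec l : ℝ) : ℂ) ^ d)
        (fun g => u x g) (fun g => ((ξ ⬝ᵥ (mOf g).mulVec l : ℝ) : ℂ))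
        (fun s g => u x (s * g))]
    exact Finset.sum_congr rfl fun g _ => by ring
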